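/- arXiv:1610.03910 — 2 statements merged into one kernel-verified Lean document; each statement's English description precedes it below -/
import Mathlib

section
/- Let f : (0, π) → ℝ be smooth with compact support in (0, π), or more generally such that all integrals below are finite and boundary terms vanish. Then ∫₀^π f² sin θ dθ ≲ ∫₀^π (∂_θ f)² sin³θ dθ + ∫₀^π f² sin³θ dθ, with an absolute implicit constant. -/
open intervalIntegral

/-- The one-dimensional weighted estimate: there is an absolute constant `C` such that for
every smooth `f` compactly supported in `(0, π)`,
`∫₀^π f² sin θ dθ ≤ C (∫₀^π (∂_θ f)² sin³θ dθ + ∫₀^π f² sin³θ dθ)`. -/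
theorem gain_sin_estimate :
    ∃ C : ℝ, 0 < C ∧ ∀ f : ℝ → ℝ, ContDiff ℝ (⊤ : ℕ∞) f → tsupport f ⊆ Set.Ioo 0 Real.pi →
      (∫ θ in (0:ℝ)..Real.pi, f θ ^ 2 * Real.sin θ)
        ≤ C * ((∫ θ in (0:ℝ)..Real.pi, (deriv f θ) ^ 2 * Real.sin θ ^ 3)
            + ∫ θ in (0:ℝ)..Real.pi, f θ ^ 2 * Real.sin θ ^ 3) := by
  refine ⟨3, by norm_num, ?_⟩
  intro f hf hsupp
  have hdf : Differentiable ℝ f := hf.differentiable (by simp)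
  have hdc : Continuous (deriv f) := hf.continuous_deriv (by simp)
  have hfc : Continuous f := hf.continuous
  -- derivative computation for F θ = f θ ^ 2 * (cos θ * sin θ ^ 2)
  have hF : ∀ θ : ℝ, HasDerivAt (fun θ => f θ ^ 2 * (Real.cos θ * Real.sin θ ^ 2))
      (2 * f θ * deriv f θ * (Real.cos θ * Real.sin θ ^ 2)
        + f θ ^ 2 * (2 * Real.sin θ * Real.cos θ ^ 2 - Real.sin θ ^ 3)) θ := by
    intro θ
    have h1 : HasDerivAt (fun θ => f θ ^ 2) (2 * f θ * deriv f θ) θ := by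
      simpa using ((hdf θ).hasDerivAt).fun_pow 2
    have h2 : HasDerivAt (fun θ => Real.cos θ * Real.sin θ ^ 2)
        (-Real.sin θ * Real.sin θ ^ 2 + Real.cos θ * (2 * Real.sin θ * Real.cos θ)) θ := by
      simpa using (Real.hasDerivAt_cos θ).fun_mul ((Real.hasDerivAt_sin θ).fun_pow 2)
    exact (h1.fun_mul h2).congr_deriv (by ring)
  have hcont : Continuous (fun θ => 2 * f θ * deriv f θ * (Real.cos θ * Real.sin θ ^ 2)
        + f θ ^ 2 * (2 * Real.sin θ * Real.cos θ ^ 2 - Real.sin θ ^ 3)) := by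
    fun_prop
  have h0 : f 0 = 0 := by
    apply image_eq_zero_of_notMem_tsupport
    intro h
    exact lt_irrefl 0 (hsupp h).1
  have hπ : f Real.pi = 0 := by
    apply image_eq_zero_of_notMem_tsupport
    intro h
    exact lt_irrefl _ (hsupp h).2
  have hibp : (∫ θ in (0:ℝ)..Real.pi,
      (2 * f θ * deriv f θ * (Real.cos θ * Real.sin θ ^ 2)
        + f θ ^ 2 * (2 * Real.sin θ * Real.cos θ ^ 2 - Real.sin θ ^ 3))) = 0 := by
    rw [intervalIntegral.integral_eq_sub_of_hasDerivAt (fun θ _ => hF θ)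
      (hcont.intervalIntegrable 0 Real.pi)]
    simp [h0, hπ]
  -- integrability of the pieces
  have hi1 : IntervalIntegrable
      (fun θ => 2 * f θ * deriv f θ * (Real.cos θ * Real.sin θ ^ 2)) MeasureTheory.volume
      0 Real.pi := by
    apply Continuous.intervalIntegrable; fun_prop
  have hi2 : IntervalIntegrable
      (fun θ => f θ ^ 2 * (2 * Real.sin θ * Real.cos θ ^ 2 - Real.sin θ ^ 3))
      MeasureTheory.volume 0 Real.pi := by
    apply Continuous.intervalIntegrable; fun_prop
  have hiA : IntervalIntegrable (fun θ => f θ ^ 2 * Real.sin θ) MeasureTheory.volume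
      0 Real.pi := by
    apply Continuous.intervalIntegrable; fun_prop
  have hiB : IntervalIntegrable (fun θ => (deriv f θ) ^ 2 * Real.sin θ ^ 3)
      MeasureTheory.volume 0 Real.pi := by
    apply Continuous.intervalIntegrable; fun_prop
  have hiD : IntervalIntegrable (fun θ => f θ ^ 2 * Real.sin θ ^ 3) MeasureTheory.volume
      0 Real.pi := by
    apply Continuous.intervalIntegrable; fun_prop
  set A := ∫ θ in (0:ℝ)..Real.pi, f θ ^ 2 * Real.sin θ with hA
  set B := ∫ θ in (0:ℝ)..Real.pi, (deriv f θ) ^ 2 * Real.sin θ ^ 3 with hB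
  set D := ∫ θ in (0:ℝ)..Real.pi, f θ ^ 2 * Real.sin θ ^ 3 with hD
  -- split the IBP identity
  rw [intervalIntegral.integral_add hi1 hi2] at hibp
  have hI2 : (∫ θ in (0:ℝ)..Real.pi,
      f θ ^ 2 * (2 * Real.sin θ * Real.cos θ ^ 2 - Real.sin θ ^ 3)) = 2 * A - 3 * D := by
    have heq : ∀ θ : ℝ, f θ ^ 2 * (2 * Real.sin θ * Real.cos θ ^ 2 - Real.sin θ ^ 3)
        = 2 * (f θ ^ 2 * Real.sin θ) - 3 * (f θ ^ 2 * Real.sin θ ^ 3) := by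
      intro θ
      have h := Real.sin_sq_add_cos_sq θ
      linear_combination (2 * f θ ^ 2 * Real.sin θ) * h
    simp_rw [heq]
    rw [intervalIntegral.integral_sub (hiA.const_mul 2) (hiD.const_mul 3),
      intervalIntegral.integral_const_mul, intervalIntegral.integral_const_mul]
  rw [hI2] at hibp
  -- pointwise bound for the cross term
  have hmono : -(∫ θ in (0:ℝ)..Real.pi,
      2 * f θ * deriv f θ * (Real.cos θ * Real.sin θ ^ 2)) ≤ A + B := by
    have : (∫ θ in (0:ℝ)..Real.pi,
        -(2 * f θ * deriv f θ * (Real.cos θ * Real.sin θ ^ 2)))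
        ≤ ∫ θ in (0:ℝ)..Real.pi, (f θ ^ 2 * Real.sin θ + (deriv f θ) ^ 2 * Real.sin θ ^ 3) := by
      apply intervalIntegral.integral_mono_on Real.pi_pos.le hi1.neg (hiA.add hiB)
      intro θ hθ
      have hs : 0 ≤ Real.sin θ := Real.sin_nonneg_of_nonneg_of_le_pi hθ.1 hθ.2
      have hc := Real.sin_sq_add_cos_sq θ
      have key : f θ ^ 2 * Real.sin θ + deriv f θ ^ 2 * Real.sin θ ^ 3
          + 2 * f θ * deriv f θ * (Real.cos θ * Real.sin θ ^ 2)
          = Real.sin θ * (f θ + deriv f θ * Real.cos θ * Real.sin θ) ^ 2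
            + deriv f θ ^ 2 * Real.sin θ ^ 5 := by
        linear_combination (-(deriv f θ ^ 2 * Real.sin θ ^ 3)) * hc
      have h1 : 0 ≤ Real.sin θ * (f θ + deriv f θ * Real.cos θ * Real.sin θ) ^ 2 :=
        mul_nonneg hs (sq_nonneg _)
      have h2 : 0 ≤ deriv f θ ^ 2 * Real.sin θ ^ 5 :=
        mul_nonneg (sq_nonneg _) (pow_nonneg hs 5)
      simp only [Pi.neg_apply]
      linarith
    rw [intervalIntegral.integral_neg, intervalIntegral.integral_add hiA hiB] at this
    exact this
  have hBnn : 0 ≤ B := by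
    apply intervalIntegral.integral_nonneg Real.pi_pos.le
    intro θ hθ
    have hs : 0 ≤ Real.sin θ := Real.sin_nonneg_of_nonneg_of_le_pi hθ.1 hθ.2
    positivity
  linarith
end

section
/- Let M > 0, let v(r) = (1/r²)(1 − 2M/r) be the Schwarzschild geodesic potential, and let u : (2M, ∞) → ℝ satisfy u(3M) = 0, u' ≥ 0 everywhere, u < 0 on (2M, 3M), and suppose the quantity w = v·u' is a positive constant on the interval [3M, 4M]. Then u'/r² − 4u/r³ > 0 for all r ∈ (2M, 4M]. -/
set_option maxHeartbeats 1000000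

open Set Real

/-- Key inequality in the Schwarzschild partial Morawetz estimate: with
`v(r) = (1/r²)(1 − 2M/r)`, if `u(3M) = 0`, `u' ≥ 0` on `(2M, ∞)`, `u < 0` on `(2M, 3M)`,
and `w = v u'` is a positive constant on `[3M, 4M]`, then `u'/r² − 4u/r³ > 0` on `(2M, 4M]`. -/
theorem up_4u_positive (M : ℝ) (hM : 0 < M) (u : ℝ → ℝ)
    (hdiff : ∀ r ∈ Set.Ioi (2 * M), DifferentiableAt ℝ u r)
    (hu3M : u (3 * M) = 0)
    (hu' : ∀ r ∈ Set.Ioi (2 * M), 0 ≤ deriv u r)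
    (huneg : ∀ r ∈ Set.Ioo (2 * M) (3 * M), u r < 0)
    (hw : ∃ c : ℝ, 0 < c ∧ ∀ r ∈ Set.Icc (3 * M) (4 * M),
      (1 / r ^ 2) * (1 - 2 * M / r) * deriv u r = c) :
    ∀ r ∈ Set.Ioc (2 * M) (4 * M), 0 < deriv u r / r ^ 2 - 4 * u r / r ^ 3 := by
  obtain ⟨c, hc, hweq⟩ := hw
  -- derivative formula on [3M, 4M]
  have hderiv : ∀ x ∈ Icc (3*M) (4*M), deriv u x = c * x^3 / (x - 2*M) := by
    intro x hx
    have hx1 : 3*M ≤ x := hx.1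
    have hx0 : 0 < x := by linarith
    have hx2 : 0 < x - 2*M := by linarith
    have h := hweq x hx
    field_simp at h ⊢
    nlinarith [h]
  intro r hr
  obtain ⟨hr1, hr2⟩ := hr
  have hr0 : 0 < r := by linarith
  have hrm : 0 < r - 2*M := by linarith
  rcases le_or_gt r (3*M) with hcase | hcase
  · rcases eq_or_lt_of_le hcase with heq | hlt
    · -- r = 3M
      subst heq
      have hd := hderiv (3*M) ⟨le_refl _, by linarith⟩
      rw [hu3M, hd]
      have h1 : 0 < c * (3*M)^3 / (3*M - 2*M) := by
        have : 0 < (3*M)^3 := by positivity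
        have h2 : (0:ℝ) < 3*M - 2*M := by linarith
        positivity
      have : 0 < c * (3*M)^3 / (3*M - 2*M) / (3*M)^2 := by positivity
      simpa using this
    · -- 2M < r < 3M
      have hun := huneg r ⟨hr1, hlt⟩
      have hup := hu' r hr1
      have h1 : 0 ≤ deriv u r / r^2 := by positivity
      have h2 : 4 * u r / r^3 < 0 :=
        div_neg_of_neg_of_pos (by linarith) (by positivity)
      linarith
  · -- 3M < r ≤ 4M
    set Φ : ℝ → ℝ := fun s => c * (s^3/3 + M*s^2 + 4*M^2*s + 8*M^3 * Real.log (s - 2*M)) with hΦdef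
    have hΦd : ∀ x ∈ Ioi (2*M), HasDerivAt Φ (c * x^3 / (x - 2*M)) x := by
      intro x hx
      have hx2 : 0 < x - 2*M := by simpa [sub_pos] using hx
      have hlog : HasDerivAt (fun s => Real.log (s - 2*M)) (1/(x - 2*M)) x := by
        have h1 : HasDerivAt (fun s : ℝ => s - 2*M) 1 x := (hasDerivAt_id x).sub_const _
        simpa using h1.log (ne_of_gt hx2)
      have hpoly : HasDerivAt (fun s : ℝ => s^3/3 + M*s^2 + 4*M^2*s)
          (x^2 + 2*M*x + 4*M^2) x := by
        have h3 := (hasDerivAt_pow 3 x).div_const 3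
        have h2 := (hasDerivAt_pow 2 x).const_mul M
        have h1 := (hasDerivAt_id x).const_mul (4*M^2)
        exact ((h3.add h2).add h1).congr_deriv (by norm_num; ring)
      have hh := ((hpoly.add (hlog.const_mul (8*M^3))).const_mul c)
      have hne : x - 2*M ≠ 0 := ne_of_gt hx2
      exact hh.congr_deriv (by field_simp; ring)
    -- MVT : u r = Φ r - Φ (3M)
    have hsub : Icc (3*M) r ⊆ Ioi (2*M) := fun x hx => by
      simp only [mem_Ioi]; have := hx.1; linarith
    have hg : ∀ x ∈ Ioi (2*M), DifferentiableAt ℝ (fun s => u s - Φ s) x :=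
      fun x hx => (hdiff x hx).sub (hΦd x hx).differentiableAt
    obtain ⟨ξ, hξ, hξeq⟩ := exists_deriv_eq_slope (fun s => u s - Φ s) hcase
      (fun x hx => ((hg x (hsub hx)).continuousAt).continuousWithinAt)
      (fun x hx => ((hg x (hsub (Ioo_subset_Icc_self hx))).differentiableWithinAt))
    have hξI : ξ ∈ Icc (3*M) (4*M) := ⟨le_of_lt hξ.1, by linarith [hξ.2]⟩
    have hξ2 : 2*M < ξ := by linarith [hξ.1]
    have hderivg : deriv (fun s => u s - Φ s) ξ = 0 := by
      rw [deriv_fun_sub (hdiff ξ hξ2) (hΦd ξ hξ2).differentiableAt,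
        (hΦd ξ hξ2).deriv, hderiv ξ hξI, sub_self]
    rw [hderivg] at hξeq
    have hru : u r = Φ r - Φ (3*M) := by
      have hne : r - 3*M ≠ 0 := by linarith
      field_simp at hξeq
      have := hξeq.symm
      rw [hu3M] at this
      linarith [this]
    -- log bound
    have hlogb : Real.log (r - 2*M) - Real.log M ≤ (r - 3*M)/M := by
      have h1 : (0:ℝ) < (r - 2*M)/M := by positivity
      have h2 := Real.log_le_sub_one_of_pos h1
      rw [Real.log_div (by linarith) (by linarith)] at h2
      have : (r - 2*M)/M - 1 = (r - 3*M)/M := by field_simp; ring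
      linarith [this ▸ h2]
    -- final inequality
    have hQ : u r ≤ c * (r^3/3 + M*r^2 + 12*M^2*r - 54*M^3) := by
      rw [hru, hΦdef]
      have key : (r^3/3 + M*r^2 + 4*M^2*r + 8*M^3 * Real.log (r - 2*M))
          - ((3*M)^3/3 + M*(3*M)^2 + 4*M^2*(3*M) + 8*M^3 * Real.log (3*M - 2*M))
          ≤ r^3/3 + M*r^2 + 12*M^2*r - 54*M^3 := by
        have h3 : (3:ℝ)*M - 2*M = M := by ring
        rw [h3]
        have hmul : 8*M^3 * (Real.log (r - 2*M) - Real.log M) ≤ 8*M^3 * ((r - 3*M)/M) :=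
          mul_le_mul_of_nonneg_left hlogb (by positivity)
        have hmul' : 8*M^3 * ((r - 3*M)/M) = 8*M^2*(r - 3*M) := by
          field_simp
        rw [hmul'] at hmul
        nlinarith [hmul]
      nlinarith [key, hc]
    have hdr : deriv u r = c * r^3 / (r - 2*M) := hderiv r ⟨le_of_lt hcase, hr2⟩
    -- polynomial inequality
    have hpolyineq : r^4 + 4*M*r^3 + 120*M^2*r^2 - 936*M^3*r + 1296*M^4 < 0 := by
      have hq : (0:ℝ) ≤ r^3 + 8*M*r^2 + 152*M^2*r - 328*M^3 := by
        nlinarith [mul_nonneg (mul_nonneg hM.le hM.le) (by linarith : (0:ℝ) ≤ r - 3*M),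
          pow_pos hM 3, pow_pos hr0 3, mul_pos hM (mul_pos hr0 hr0)]
      nlinarith [mul_nonneg (by linarith : (0:ℝ) ≤ 4*M - r) hq, pow_pos hM 4]
    set Q : ℝ := r^3/3 + M*r^2 + 12*M^2*r - 54*M^3 with hQdef
    clear_value Q
    have hne : r - 2*M ≠ 0 := ne_of_gt hrm
    have hA : 4*(c*Q) < c * r^4 / (r - 2*M) := by
      rw [lt_div_iff₀ hrm]
      have h2 : 0 < r^4 - 4*Q*(r - 2*M) := by rw [hQdef]; nlinarith [hpolyineq]
      nlinarith [mul_pos hc h2]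
    have hrd : r * deriv u r = c * r^4 / (r - 2*M) := by
      rw [hdr]; field_simp
    have hnum : 0 < r * deriv u r - 4 * u r := by
      rw [hrd]; linarith [hQ, hA]
    have hrw : deriv u r / r^2 - 4 * u r / r^3 = (r * deriv u r - 4 * u r) / r^3 := by
      field_simp
    rw [hrw]
    exact div_pos hnum (by positivity)
end
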